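/- Let I ⊆ {0,…,2^n−1}. Every permutation in LTA is an automorphism of the code C(I) (i.e., LTA is contained in the set of affine automorphisms of C(I)) if and only if I is UPO-compliant. -/

import Mathlib

/-- Binary expansion of `i`, LSB first, as a vector over `𝔽₂` (`bin(i)_t` = `t`-th bit of `i`). -/
def binExp (n : ℕ) (i : ℕ) : Fin n → ZMod 2 := fun t => if Nat.testBit i t then 1 else 0

/-- Integer corresponding to a binary vector (LSB first); inverse of `binExp`. -/
def vecToNat (n : ℕ) (v : Fin n → ZMod 2) : ℕ := ∑ t : Fin n, (v t).val * 2 ^ (t : ℕ)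

lemma sum_two_pow (n : ℕ) : ∑ i ∈ Finset.range n, 2 ^ i = 2 ^ n - 1 := by
  induction n with
  | zero => simp
  | succ k ih =>
      rw [Finset.sum_range_succ, ih]
      have h1 : 1 ≤ 2 ^ k := Nat.one_le_two_pow
      have h2 : 2 ^ (k + 1) = 2 ^ k * 2 := pow_succ 2 k
      omega

lemma vecToNat_lt (n : ℕ) (v : Fin n → ZMod 2) : vecToNat n v < 2 ^ n := by
  have h2 : vecToNat n v ≤ ∑ t : Fin n, 1 * 2 ^ (t : ℕ) := by
    refine Finset.sum_le_sum fun t _ => Nat.mul_le_mul_right _ ?_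
    have : (v t).val < 2 := ZMod.val_lt (v t)
    omega
  have h3 : ∑ t : Fin n, 1 * 2 ^ (t : ℕ) = ∑ t ∈ Finset.range n, 2 ^ t := by
    simp [Fin.sum_univ_eq_sum_range]
  have h4 := sum_two_pow n
  have h5 : 1 ≤ 2 ^ n := Nat.one_le_two_pow
  unfold vecToNat at *
  omega

/-- The permutation `π_{(A,b)}` of `{0,…,2^n−1}` induced by the affine transformation
`v ↦ A·v + b`, i.e. the map determined by `bin (π_{(A,b)} i) = A · bin i + b`. -/
def affinePerm (n : ℕ) (A : Matrix (Fin n) (Fin n) (ZMod 2)) (b : Fin n → ZMod 2)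
    (i : Fin (2 ^ n)) : Fin (2 ^ n) :=
  ⟨vecToNat n (A.mulVec (binExp n i) + b), vecToNat_lt n _⟩


/-- The negative monomial `m_t = ∏_{i : bin(t)_i = 0} (1 + V_i)` as a boolean function. -/
def negMonomial (n : ℕ) (t : ℕ) : (Fin n → ZMod 2) → ZMod 2 :=
  fun v => ∏ i ∈ Finset.univ.filter (fun i : Fin n => ¬ Nat.testBit t i), (1 + v i)

/-- Evaluation vector of a boolean function: `eval(f) = (f(bin 0),…,f(bin (2^n−1)))`. -/
def evalFun (n : ℕ) (f : (Fin n → ZMod 2) → ZMod 2) : Fin (2 ^ n) → ZMod 2 :=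
  fun i => f (binExp n i)

/-- The monomial (polar) code `C(I)`: the `𝔽₂`-span of `{eval(m_t) : t ∈ I}`. -/
def code (n : ℕ) (I : Set ℕ) : Submodule (ZMod 2) (Fin (2 ^ n) → ZMod 2) :=
  Submodule.span (ZMod 2) {x | ∃ t ∈ I, x = evalFun n (negMonomial n t)}

/-- `π` is an automorphism of the code `C`: `(x_{π(0)},…,x_{π(N−1)}) ∈ C` for all `x ∈ C`. -/
def IsCodeAut {N : ℕ} (C : Set (Fin N → ZMod 2)) (π : Fin N → Fin N) : Prop :=
  ∀ x ∈ C, (fun i => x (π i)) ∈ C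


/-- One step of the universal partial order on indices: `i ◁ j`. -/
def polarCovers (n : ℕ) (i j : ℕ) : Prop :=
  (∃ t < n, Nat.testBit i t = false ∧ Nat.testBit j t = true ∧
      ∀ s, s ≠ t → Nat.testBit i s = Nat.testBit j s) ∨
  (∃ t, t + 1 < n ∧ Nat.testBit i t = true ∧ Nat.testBit i (t + 1) = false ∧
      Nat.testBit j t = false ∧ Nat.testBit j (t + 1) = true ∧
      ∀ s, s ≠ t → s ≠ t + 1 → Nat.testBit i s = Nat.testBit j s)

/-- The polar (universal) partial order `⪯`: reflexive-transitive closure of `◁`. -/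
def polarLE (n : ℕ) : ℕ → ℕ → Prop := Relation.ReflTransGen (polarCovers n)

/-- `I` is UPO-compliant: `i ⪯ j` (polar order) and `i ∈ I` imply `j ∈ I`. -/
def UPOCompliant (n : ℕ) (I : Set ℕ) : Prop :=
  ∀ i ∈ I, ∀ j < 2 ^ n, polarLE n i j → j ∈ I


lemma zmod2_val_cases (a : ZMod 2) : a = 0 ∨ a = 1 := by revert a; decide

lemma vecToNat_succ (n : ℕ) (v : Fin (n+1) → ZMod 2) :
    vecToNat (n+1) v = (v 0).val + 2 * vecToNat n (v ∘ Fin.succ) := by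
  unfold vecToNat
  rw [Fin.sum_univ_succ, Finset.mul_sum]
  simp only [Fin.val_zero, pow_zero, mul_one, Fin.val_succ]
  congr 1
  apply Finset.sum_congr rfl; intro t _
  rw [Function.comp_apply, pow_succ]
  ring

lemma testBit_vecToNat (n : ℕ) (v : Fin n → ZMod 2) (k : ℕ) :
    Nat.testBit (vecToNat n v) k = if h : k < n then (v ⟨k, h⟩ = 1 : Bool) else false := by
  induction n generalizing k with
  | zero =>
      simp [vecToNat]
  | succ m ih =>
      rw [vecToNat_succ]
      have hv0 : (v 0).val < 2 := ZMod.val_lt _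
      cases k with
      | zero =>
          simp only [Nat.testBit_zero]
          have : ((v 0).val + 2 * vecToNat m (v ∘ Fin.succ)) % 2 = (v 0).val := by omega
          rw [this]
          rcases zmod2_val_cases (v 0) with h | h <;> simp [h] <;> decide
      | succ k =>
          rw [Nat.testBit_succ]
          have : ((v 0).val + 2 * vecToNat m (v ∘ Fin.succ)) / 2 = vecToNat m (v ∘ Fin.succ) := by
            omega
          rw [this, ih]
          by_cases h : k < m
          · simp [h, Nat.succ_lt_succ h, Function.comp, Fin.succ]
          · simp [h, fun hh => h (Nat.lt_of_succ_lt_succ hh)]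

lemma binExp_vecToNat (n : ℕ) (v : Fin n → ZMod 2) : binExp n (vecToNat n v) = v := by
  funext t
  unfold binExp
  rw [testBit_vecToNat]
  rcases zmod2_val_cases (v t) with h | h <;> simp [h]

lemma lt_two_pow_of_testBit' {x n : ℕ} (h : ∀ i, n ≤ i → Nat.testBit x i = false) : x < 2 ^ n := by
  by_contra hx
  obtain ⟨i, hi, ht⟩ := Nat.exists_ge_and_testBit_of_ge_two_pow (Nat.le_of_not_lt hx)
  rw [h i hi] at ht; exact Bool.false_ne_true ht

lemma vecToNat_binExp (n : ℕ) (i : ℕ) (hi : i < 2 ^ n) : vecToNat n (binExp n i) = i := by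
  apply Nat.eq_of_testBit_eq
  intro k
  rw [testBit_vecToNat]
  by_cases h : k < n
  · simp only [h, dif_pos]
    unfold binExp
    by_cases hb : Nat.testBit i k <;> simp [hb]
  · rw [dif_neg h, Nat.testBit_lt_two_pow
      (lt_of_lt_of_le hi (Nat.pow_le_pow_right (by norm_num) (Nat.le_of_not_lt h)))]

lemma and_eq_left_iff (a b : ℕ) :
    a &&& b = a ↔ ∀ k, Nat.testBit a k = true → Nat.testBit b k = true := by
  constructor
  · intro h k hk
    have := congrArg (fun m => Nat.testBit m k) h
    simp only [Nat.testBit_and, hk, Bool.true_and] at this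
    exact this
  · intro h
    apply Nat.eq_of_testBit_eq
    intro k
    rw [Nat.testBit_and]
    cases hA : a.testBit k
    · simp
    · simp [h k hA]

lemma testBit_lt_of_lt {i : ℕ} {n k : ℕ} (hi : i < 2 ^ n) (hk : Nat.testBit i k = true) :
    k < n := by
  by_contra h
  rw [Nat.testBit_lt_two_pow
    (lt_of_lt_of_le hi (Nat.pow_le_pow_right (by norm_num) (Nat.le_of_not_lt h)))] at hk
  exact Bool.false_ne_true hk

lemma evalNegMonomial (n t : ℕ) (i : Fin (2 ^ n)) :
    evalFun n (negMonomial n t) i = if (i : ℕ) &&& t = (i : ℕ) then 1 else 0 := by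
  unfold evalFun negMonomial
  by_cases h : (i : ℕ) &&& t = (i : ℕ)
  · rw [if_pos h]
    apply Finset.prod_eq_one
    intro k hk
    rw [Finset.mem_filter] at hk
    have hik : Nat.testBit (i : ℕ) k = false := by
      cases hb : Nat.testBit (i : ℕ) k
      · rfl
      · exact absurd ((and_eq_left_iff _ _).1 h k hb) hk.2
    simp [binExp, hik]
  · rw [if_neg h]
    rw [and_eq_left_iff] at h
    push_neg at h
    obtain ⟨k, hik, htk⟩ := h
    have hkn : k < n := testBit_lt_of_lt i.isLt hik
    refine Finset.prod_eq_zero (i := ⟨k, hkn⟩) ?_ ?_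
    · simp only [Finset.mem_filter, Finset.mem_univ, true_and]
      simpa using htk
    · simp [binExp, hik]
      decide

lemma and_sub_trans {a b c : ℕ} (h1 : a &&& b = a) (h2 : b &&& c = b) : a &&& c = a := by
  rw [and_eq_left_iff] at *
  exact fun k hk => h2 k (h1 k hk)

lemma and_sub_antisymm {a b : ℕ} (h1 : a &&& b = a) (h2 : b &&& a = b) : a = b := by
  rw [and_eq_left_iff] at *
  apply Nat.eq_of_testBit_eq
  intro k
  cases hA : a.testBit k
  · cases hB : b.testBit k
    · rfl
    · rw [← hA, h2 k hB]
  · rw [h1 k hA]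

lemma sum_indicator (n s u : ℕ) (hs : s < 2 ^ n) (hu : u < 2 ^ n) :
    ∑ j : Fin (2 ^ n), (if s &&& (j : ℕ) = s then (1 : ZMod 2) else 0) *
      (if (j : ℕ) &&& u = (j : ℕ) then 1 else 0) = if s = u then 1 else 0 := by
  classical
  have hrw : ∀ j : Fin (2 ^ n),
      (if s &&& (j : ℕ) = s then (1 : ZMod 2) else 0) *
        (if (j : ℕ) &&& u = (j : ℕ) then 1 else 0)
      = if (s &&& (j : ℕ) = s ∧ (j : ℕ) &&& u = (j : ℕ)) then 1 else 0 := by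
    intro j
    by_cases h1 : s &&& (j : ℕ) = s <;> by_cases h2 : (j : ℕ) &&& u = (j : ℕ) <;>
      simp [h1, h2]
  simp only [hrw]
  rw [← Finset.sum_filter]
  by_cases hsu : s = u
  · subst hsu
    rw [if_pos rfl]
    have hset : Finset.univ.filter
        (fun j : Fin (2 ^ n) => s &&& (j : ℕ) = s ∧ (j : ℕ) &&& s = (j : ℕ)) = {⟨s, hs⟩} := by
      ext j
      simp only [Finset.mem_filter, Finset.mem_univ, true_and, Finset.mem_singleton]
      constructor
      · rintro ⟨h1, h2⟩
        exact Fin.ext (and_sub_antisymm h2 h1)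
      · rintro rfl
        simp [Nat.and_self]
    rw [hset, Finset.sum_singleton]
  · rw [if_neg hsu]
    by_cases hss : s &&& u = s
    · -- s ⊊ u : involution
      have hne : ¬ (u &&& s = u) := fun h => hsu (and_sub_antisymm hss h)
      rw [and_eq_left_iff] at hne
      push_neg at hne
      obtain ⟨k, huk, hsk⟩ := hne
      have hsk' : Nat.testBit s k = false := Bool.eq_false_iff.mpr hsk
      have hkn : k < n := testBit_lt_of_lt hu huk
      have h2k : 2 ^ k < 2 ^ n := Nat.pow_lt_pow_right (by norm_num) hkn
      refine Finset.sum_involution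
        (g := fun j _ => ⟨(j : ℕ) ^^^ 2 ^ k, Nat.xor_lt_two_pow j.isLt h2k⟩)
        ?_ ?_ ?_ ?_
      · intro a ha; decide
      · intro a ha _
        intro hEq
        have := congrArg (fun m : Fin (2 ^ n) => Nat.testBit (m : ℕ) k) hEq
        simp [Nat.testBit_xor, Nat.testBit_two_pow] at this
      · intro j hj
        simp only [Finset.mem_filter, Finset.mem_univ, true_and] at hj ⊢
        obtain ⟨h1, h2⟩ := hj
        rw [and_eq_left_iff] at h1 h2
        constructor
        · rw [and_eq_left_iff]
          intro r hr
          have hrk : r ≠ k := by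
            rintro rfl; rw [hr] at hsk'; exact Bool.noConfusion hsk'
          rw [Nat.testBit_xor, Nat.testBit_two_pow]
          have : (decide (k = r)) = false := by simp [Ne.symm hrk]
          rw [this, h1 r hr, Bool.xor_false]
        · rw [and_eq_left_iff]
          intro r hr
          rw [Nat.testBit_xor, Nat.testBit_two_pow] at hr
          by_cases hrk : r = k
          · subst hrk; exact huk
          · have : (decide (k = r)) = false := by simp [Ne.symm hrk]
            rw [this, Bool.xor_false] at hr
            exact h2 r hr
      · intro j hj
        apply Fin.ext
        simp [xor_cancel_right]
    · -- S empty
      have : Finset.univ.filter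
          (fun j : Fin (2 ^ n) => s &&& (j : ℕ) = s ∧ (j : ℕ) &&& u = (j : ℕ)) = ∅ := by
        apply Finset.eq_empty_of_forall_notMem
        intro j hj
        simp only [Finset.mem_filter, Finset.mem_univ, true_and] at hj
        exact hss (and_sub_trans hj.1 hj.2)
      rw [this, Finset.sum_empty]

def coeffAt (n s : ℕ) (x : Fin (2 ^ n) → ZMod 2) : ZMod 2 :=
  ∑ j : Fin (2 ^ n), (if s &&& (j : ℕ) = s then 1 else 0) * x j

lemma coeffAt_add (n s : ℕ) (x y : Fin (2 ^ n) → ZMod 2) :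
    coeffAt n s (x + y) = coeffAt n s x + coeffAt n s y := by
  simp [coeffAt, mul_add, Finset.sum_add_distrib]

lemma coeffAt_smul (n s : ℕ) (c : ZMod 2) (x : Fin (2 ^ n) → ZMod 2) :
    coeffAt n s (c • x) = c * coeffAt n s x := by
  simp [coeffAt, Finset.mul_sum]

lemma coeffAt_eval (n s u : ℕ) (hs : s < 2 ^ n) (hu : u < 2 ^ n) :
    coeffAt n s (evalFun n (negMonomial n u)) = if s = u then 1 else 0 := by
  unfold coeffAt
  have : ∀ j : Fin (2 ^ n), evalFun n (negMonomial n u) j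
      = if (j : ℕ) &&& u = (j : ℕ) then 1 else 0 := fun j => evalNegMonomial n u j
  simp only [this]
  exact sum_indicator n s u hs hu

lemma coeffAt_eq_zero_of_mem_code {n : ℕ} {I : Set ℕ} (hI : ∀ i ∈ I, i < 2 ^ n)
    {s : ℕ} (hs : s < 2 ^ n) (hsI : s ∉ I) {x : Fin (2 ^ n) → ZMod 2}
    (hx : x ∈ code n I) : coeffAt n s x = 0 := by
  induction hx using Submodule.span_induction with
  | mem y hy =>
      obtain ⟨t, htI, rfl⟩ := hy
      rw [coeffAt_eval n s t hs (hI t htI)]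
      rw [if_neg]
      rintro rfl
      exact hsI htI
  | zero => simp [coeffAt]
  | add y z _ _ ihy ihz => rw [coeffAt_add, ihy, ihz, add_zero]
  | smul c y _ ihy => rw [coeffAt_smul, ihy, mul_zero]

lemma mem_of_eval_mem {n : ℕ} {I : Set ℕ} (hI : ∀ i ∈ I, i < 2 ^ n)
    {s : ℕ} (hs : s < 2 ^ n) (h : evalFun n (negMonomial n s) ∈ code n I) : s ∈ I := by
  by_contra hsI
  have h0 := coeffAt_eq_zero_of_mem_code hI hs hsI h
  rw [coeffAt_eval n s s hs hs, if_pos rfl] at h0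
  exact one_ne_zero h0

lemma binExp_affinePerm (n : ℕ) (A : Matrix (Fin n) (Fin n) (ZMod 2)) (b : Fin n → ZMod 2)
    (i : Fin (2 ^ n)) : binExp n (affinePerm n A b i) = A.mulVec (binExp n i) + b := by
  simp [affinePerm, binExp_vecToNat]

lemma affinePerm_comp (n : ℕ) (A B : Matrix (Fin n) (Fin n) (ZMod 2)) (b c : Fin n → ZMod 2) :
    (affinePerm n A b) ∘ (affinePerm n B c) = affinePerm n (A * B) (A.mulVec c + b) := by
  funext i
  apply Fin.ext
  show vecToNat n (A.mulVec (binExp n (affinePerm n B c i)) + b) = _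
  rw [binExp_affinePerm, Matrix.mulVec_add, Matrix.mulVec_mulVec]
  show vecToNat n _ = vecToNat n _
  congr 1
  abel

lemma isCodeAut_comp {N : ℕ} {C : Set (Fin N → ZMod 2)} {π σ : Fin N → Fin N}
    (hπ : IsCodeAut C π) (hσ : IsCodeAut C σ) : IsCodeAut C (π ∘ σ) := by
  intro x hx
  exact hσ (fun i => x (π i)) (hπ x hx)

lemma isCodeAut_id {N : ℕ} (C : Set (Fin N → ZMod 2)) : IsCodeAut C id := fun x hx => hx

lemma affinePerm_one_zero (n : ℕ) : affinePerm n 1 0 = id := by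
  funext i
  apply Fin.ext
  show vecToNat n (Matrix.mulVec 1 (binExp n i) + 0) = (i : ℕ)
  rw [Matrix.one_mulVec, add_zero, vecToNat_binExp n i i.isLt]

/-- To check a permutation is an automorphism of the code, it suffices on generators. -/

lemma isCodeAut_code_of {n : ℕ} {I : Set ℕ} {π : Fin (2 ^ n) → Fin (2 ^ n)}
    (h : ∀ t ∈ I, (fun i => evalFun n (negMonomial n t) (π i)) ∈ code n I) :
    IsCodeAut (code n I : Set (Fin (2 ^ n) → ZMod 2)) π := by
  intro x hx
  induction hx using Submodule.span_induction with
  | mem y hy =>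
      obtain ⟨t, htI, rfl⟩ := hy
      exact h t htI
  | zero => exact Submodule.zero_mem _
  | add y z _ _ ihy ihz => exact Submodule.add_mem _ ihy ihz
  | smul c y _ ihy => exact Submodule.smul_mem _ c ihy

section Monomials

variable {n : ℕ}

lemma zmod2_decide (p : ZMod 2 → ZMod 2 → ZMod 2 → Prop) [DecidablePred fun x : ZMod 2 × ZMod 2 × ZMod 2 => p x.1 x.2.1 x.2.2]
    (h : ∀ x : ZMod 2 × ZMod 2 × ZMod 2, p x.1 x.2.1 x.2.2) (a b c : ZMod 2) : p a b c := h (a, b, c)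

lemma filter_xor_erase (t : ℕ) (k : Fin n) (htk : Nat.testBit t k = false) :
    (Finset.univ.filter (fun i : Fin n => ¬ Nat.testBit (t ^^^ 2 ^ (k : ℕ)) i))
      = (Finset.univ.filter (fun i : Fin n => ¬ Nat.testBit t i)).erase k := by
  ext r
  simp only [Finset.mem_filter, Finset.mem_univ, true_and, Finset.mem_erase,
    Nat.testBit_xor, Nat.testBit_two_pow]
  by_cases hrk : r = k
  · subst hrk
    simp [htk]
  · have : ((k : ℕ) = (r : ℕ)) = False := by
      simp only [eq_iff_iff, iff_false]
      exact fun h => hrk (Fin.ext h.symm)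
    simp [this, hrk]

lemma mem_filter_zero (t : ℕ) (k : Fin n) (htk : Nat.testBit t k = false) :
    k ∈ Finset.univ.filter (fun i : Fin n => ¬ Nat.testBit t i) := by
  simp [htk]

lemma negMonomial_factor (t : ℕ) (k : Fin n) (htk : Nat.testBit t k = false)
    (v : Fin n → ZMod 2) :
    negMonomial n t v = (1 + v k) * negMonomial n (t ^^^ 2 ^ (k : ℕ)) v := by
  unfold negMonomial
  rw [filter_xor_erase t k htk]
  exact (Finset.mul_prod_erase _ _ (mem_filter_zero t k htk)).symm

lemma negMonomial_congr (t : ℕ) (v w : Fin n → ZMod 2)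
    (h : ∀ r : Fin n, Nat.testBit t r = false → w r = v r) :
    negMonomial n t w = negMonomial n t v := by
  unfold negMonomial
  apply Finset.prod_congr rfl
  intro r hr
  rw [Finset.mem_filter] at hr
  rw [h r (Bool.eq_false_iff.mpr hr.2)]

lemma testBit_xor_pow (t k r : ℕ) :
    Nat.testBit (t ^^^ 2 ^ k) r = ((Nat.testBit t r).xor (decide (k = r))) := by
  simp [Nat.testBit_xor, Nat.testBit_two_pow]

/-- Translation step, bit present: monomial unchanged. -/

lemma negMonomial_translate_true (t : ℕ) (k : Fin n) (htk : Nat.testBit t k = true)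
    (v : Fin n → ZMod 2) :
    negMonomial n t (v + Pi.single k 1) = negMonomial n t v := by
  apply negMonomial_congr
  intro r hr
  have hrk : r ≠ k := by rintro rfl; rw [htk] at hr; exact Bool.noConfusion hr
  simp [Pi.single_apply, hrk]

/-- Translation step, bit absent. -/

lemma negMonomial_translate_false (t : ℕ) (k : Fin n) (htk : Nat.testBit t k = false)
    (v : Fin n → ZMod 2) :
    negMonomial n t (v + Pi.single k 1)
      = negMonomial n t v + negMonomial n (t ^^^ 2 ^ (k : ℕ)) v := by
  have hbit : Nat.testBit (t ^^^ 2 ^ (k : ℕ)) k = true := by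
    rw [testBit_xor_pow, htk]; simp
  rw [negMonomial_factor t k htk (v + Pi.single k 1),
      negMonomial_congr (t ^^^ 2 ^ (k : ℕ)) v (v + Pi.single k 1) ?hcongr,
      negMonomial_factor t k htk v]
  case hcongr =>
    intro r hr
    have hrk : r ≠ k := by rintro rfl; rw [hbit] at hr; exact Bool.noConfusion hr
    simp [Pi.single_apply, hrk]
  have hvk : ((v + Pi.single k 1 : Fin n → ZMod 2)) k = v k + 1 := by
    simp [Pi.single_apply]
  rw [hvk]
  generalize negMonomial n (t ^^^ 2 ^ (k : ℕ)) v = M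
  generalize v k = a
  revert a M
  decide

/-- Transvection step `v ↦ v + single i (v j)`, case `bit i t = true`. -/

lemma negMonomial_transvec_true (t : ℕ) (i j : Fin n) (hti : Nat.testBit t i = true)
    (v : Fin n → ZMod 2) :
    negMonomial n t (v + Pi.single i (v j)) = negMonomial n t v := by
  apply negMonomial_congr
  intro r hr
  have hrk : r ≠ i := by rintro rfl; rw [hti] at hr; exact Bool.noConfusion hr
  simp [Pi.single_apply, hrk]

/-- Transvection step, case `bit i t = false`, `bit j t = false`. -/

lemma negMonomial_transvec_ff (t : ℕ) (i j : Fin n) (hij : i ≠ j)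
    (hti : Nat.testBit t i = false) (htj : Nat.testBit t j = false)
    (v : Fin n → ZMod 2) :
    negMonomial n t (v + Pi.single i (v j)) = negMonomial n t v := by
  have hvalne : (i : ℕ) ≠ (j : ℕ) := fun h => hij (Fin.ext h)
  have htj' : Nat.testBit (t ^^^ 2 ^ (i : ℕ)) j = false := by
    rw [testBit_xor_pow, htj]; simp [hvalne]
  have hvalne' : ¬ ((j : ℕ) = (i : ℕ)) := fun h => hvalne h.symm
  have hti2 : Nat.testBit ((t ^^^ 2 ^ (i : ℕ)) ^^^ 2 ^ (j : ℕ)) i = true := by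
    rw [testBit_xor_pow, testBit_xor_pow, hti]
    simp [hvalne']
  set w := v + Pi.single i (v j) with hw
  have hijne : ¬ (j = i) := fun h => hij h.symm
  have hwj : w j = v j := by simp [hw, Pi.single_apply, hijne]
  have hwi : w i = v i + v j := by simp [hw]
  rw [negMonomial_factor t i hti w, negMonomial_factor (t ^^^ 2 ^ (i : ℕ)) j htj' w,
      negMonomial_congr _ v w ?hcongr, hwi, hwj]
  case hcongr =>
    intro r hr
    have hrk : r ≠ i := by rintro rfl; rw [hti2] at hr; exact Bool.noConfusion hr
    simp [hw, Pi.single_apply, hrk]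
  rw [negMonomial_factor t i hti v, negMonomial_factor (t ^^^ 2 ^ (i : ℕ)) j htj' v]
  generalize negMonomial n ((t ^^^ 2 ^ (i : ℕ)) ^^^ 2 ^ (j : ℕ)) v = M
  generalize v i = a
  generalize v j = b
  revert a b M
  decide

/-- Transvection step, case `bit i t = false`, `bit j t = true`. -/

lemma negMonomial_transvec_ft (t : ℕ) (i j : Fin n) (hij : i ≠ j)
    (hti : Nat.testBit t i = false) (htj : Nat.testBit t j = true)
    (v : Fin n → ZMod 2) :
    negMonomial n t (v + Pi.single i (v j))
      = negMonomial n t v + negMonomial n (t ^^^ 2 ^ (i : ℕ)) v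
        + negMonomial n ((t ^^^ 2 ^ (i : ℕ)) ^^^ 2 ^ (j : ℕ)) v := by
  have hvalne : (i : ℕ) ≠ (j : ℕ) := fun h => hij (Fin.ext h)
  have hti1 : Nat.testBit (t ^^^ 2 ^ (i : ℕ)) i = true := by
    rw [testBit_xor_pow, hti]; simp
  have htj1 : Nat.testBit ((t ^^^ 2 ^ (i : ℕ)) ^^^ 2 ^ (j : ℕ)) j = false := by
    rw [testBit_xor_pow, testBit_xor_pow, htj]; simp [hvalne]
  set w := v + Pi.single i (v j) with hw
  have hwi : w i = v i + v j := by simp [hw]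
  -- LHS
  rw [negMonomial_factor t i hti w, negMonomial_congr _ v w ?hcongr, hwi]
  case hcongr =>
    intro r hr
    have hrk : r ≠ i := by rintro rfl; rw [hti1] at hr; exact Bool.noConfusion hr
    simp [hw, Pi.single_apply, hrk]
  -- RHS third term
  have hthird : negMonomial n ((t ^^^ 2 ^ (i : ℕ)) ^^^ 2 ^ (j : ℕ)) v
      = (1 + v j) * negMonomial n (t ^^^ 2 ^ (i : ℕ)) v := by
    rw [negMonomial_factor _ j htj1 v, xor_cancel_right]
  rw [hthird, negMonomial_factor t i hti v]
  generalize negMonomial n (t ^^^ 2 ^ (i : ℕ)) v = M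
  generalize v i = a
  generalize v j = b
  revert a b M
  decide

end Monomials

section Perms

variable {n : ℕ}

lemma perm_evalFun (A : Matrix (Fin n) (Fin n) (ZMod 2)) (b : Fin n → ZMod 2)
    (f : (Fin n → ZMod 2) → ZMod 2) :
    (fun idx => evalFun n f (affinePerm n A b idx))
      = evalFun n (fun v => f (A.mulVec v + b)) := by
  funext idx
  simp [evalFun, binExp_affinePerm]

lemma perm_eval_translate (k : Fin n) (t : ℕ) :
    (fun idx => evalFun n (negMonomial n t) (affinePerm n 1 (Pi.single k 1) idx))
      = evalFun n (fun v => negMonomial n t (v + Pi.single k 1)) := by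
  rw [perm_evalFun]
  simp only [Matrix.one_mulVec]

lemma transvec_mulVec (i j : Fin n) (v : Fin n → ZMod 2) :
    (1 + Matrix.single i j (1 : ZMod 2)).mulVec v = v + Pi.single i (v j) := by
  rw [Matrix.add_mulVec, Matrix.one_mulVec, Matrix.single_mulVec, one_mul]
  congr 1

lemma perm_eval_transvec (i j : Fin n) (t : ℕ) :
    (fun idx => evalFun n (negMonomial n t)
        (affinePerm n (1 + Matrix.single i j (1 : ZMod 2)) 0 idx))
      = evalFun n (fun v => negMonomial n t (v + Pi.single i (v j))) := by
  rw [perm_evalFun]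
  simp only [add_zero, transvec_mulVec]

lemma xor4 (x a b c : ℕ) : ((((x ^^^ a) ^^^ b) ^^^ c) ^^^ a) = (x ^^^ c) ^^^ b := by
  apply Nat.eq_of_testBit_eq
  intro r
  simp only [Nat.testBit_xor]
  cases x.testBit r <;> cases a.testBit r <;> cases b.testBit r <;> cases c.testBit r <;> rfl

lemma polarCovers_flip (t : ℕ) (k : ℕ) (hk : k < n) (htk : Nat.testBit t k = false) :
    polarCovers n t (t ^^^ 2 ^ k) := by
  left
  refine ⟨k, hk, htk, ?_, ?_⟩
  · rw [testBit_xor_pow, htk]; simp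
  · intro s hs
    rw [testBit_xor_pow]
    have : (decide (k = s)) = false := by simp [Ne.symm hs]
    rw [this, Bool.xor_false]

lemma polarCovers_swap (t : ℕ) (k : ℕ) (hk : k + 1 < n)
    (h1 : Nat.testBit t k = true) (h2 : Nat.testBit t (k + 1) = false) :
    polarCovers n t ((t ^^^ 2 ^ k) ^^^ 2 ^ (k + 1)) := by
  right
  refine ⟨k, hk, h1, h2, ?_, ?_, ?_⟩
  · rw [testBit_xor_pow, testBit_xor_pow, h1]
    simp
  · rw [testBit_xor_pow, testBit_xor_pow, h2]
    simp
  · intro s hs hs1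
    rw [testBit_xor_pow, testBit_xor_pow]
    have e1 : (decide (k = s)) = false := by simp [Ne.symm hs]
    have e2 : (decide (k + 1 = s)) = false := by simp [Ne.symm hs1]
    rw [e1, e2, Bool.xor_false, Bool.xor_false]

lemma polarLE_move : ∀ d j t, 0 < d → j + d < n → Nat.testBit t j = true →
    Nat.testBit t (j + d) = false → polarLE n t ((t ^^^ 2 ^ j) ^^^ 2 ^ (j + d)) := by
  intro d
  induction d using Nat.strong_induction_on with
  | _ d ih =>
  intro j t hd hn hbj hbi
  rcases eq_or_lt_of_le (show 1 ≤ d from hd) with h1 | h1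
  · -- d = 1
    have : j + d = j + 1 := by omega
    rw [this] at hbi ⊢
    exact Relation.ReflTransGen.single (polarCovers_swap t j (by omega) hbj hbi)
  · -- d ≥ 2
    cases hmid : Nat.testBit t (j + 1) with
    | false =>
        have hcov : polarCovers n t ((t ^^^ 2 ^ j) ^^^ 2 ^ (j + 1)) :=
          polarCovers_swap t j (by omega) hbj hmid
        set t1 := (t ^^^ 2 ^ j) ^^^ 2 ^ (j + 1) with ht1
        have hb1 : Nat.testBit t1 (j + 1) = true := by
          rw [ht1, testBit_xor_pow, testBit_xor_pow, hmid]
          have : (decide (j = j + 1)) = false := by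
            simp only [decide_eq_false_iff_not]; omega
          rw [this]; simp
        have hb2 : Nat.testBit t1 (j + 1 + (d - 1)) = false := by
          have hne1 : (decide (j = j + 1 + (d - 1))) = false := by simp only [decide_eq_false_iff_not]; omega
          have hne2 : (decide (j + 1 = j + 1 + (d - 1))) = false := by simp only [decide_eq_false_iff_not]; omega
          rw [ht1, testBit_xor_pow, testBit_xor_pow, hne1, hne2,
            Bool.xor_false, Bool.xor_false]
          have : j + 1 + (d - 1) = j + d := by omega
          rw [this]; exact hbi
        have hrec := ih (d - 1) (by omega) (j + 1) t1 (by omega) (by omega) hb1 hb2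
        have heq : (t1 ^^^ 2 ^ (j + 1)) ^^^ 2 ^ (j + 1 + (d - 1)) = (t ^^^ 2 ^ j) ^^^ 2 ^ (j + d) := by
          have e : j + 1 + (d - 1) = j + d := by omega
          rw [ht1, xor_cancel_right, e]
        rw [heq] at hrec
        exact Relation.ReflTransGen.head hcov hrec
    | true =>
        have hb2 : Nat.testBit t (j + 1 + (d - 1)) = false := by
          have : j + 1 + (d - 1) = j + d := by omega
          rw [this]; exact hbi
        have hrec := ih (d - 1) (by omega) (j + 1) t (by omega) (by omega) hmid hb2
        set t2 := (t ^^^ 2 ^ (j + 1)) ^^^ 2 ^ (j + 1 + (d - 1)) with ht2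
        have hbj2 : Nat.testBit t2 j = true := by
          have hne1 : (decide (j + 1 = j)) = false := by simp
          have hne2 : (decide (j + 1 + (d - 1) = j)) = false := by simp only [decide_eq_false_iff_not]; omega
          rw [ht2, testBit_xor_pow, testBit_xor_pow, hne1, hne2,
            Bool.xor_false, Bool.xor_false]
          exact hbj
        have hbj12 : Nat.testBit t2 (j + 1) = false := by
          have hne2 : (decide (j + 1 + (d - 1) = j + 1)) = false := by simp only [decide_eq_false_iff_not]; omega
          rw [ht2, testBit_xor_pow, testBit_xor_pow, hne2, Bool.xor_false, hmid]
          simp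
        have hcov : polarCovers n t2 ((t2 ^^^ 2 ^ j) ^^^ 2 ^ (j + 1)) :=
          polarCovers_swap t2 j (by omega) hbj2 hbj12
        have heq : (t2 ^^^ 2 ^ j) ^^^ 2 ^ (j + 1) = (t ^^^ 2 ^ j) ^^^ 2 ^ (j + d) := by
          rw [ht2]
          have : j + 1 + (d - 1) = j + d := by omega
          rw [this]
          exact xor4 t (2 ^ (j + 1)) (2 ^ (j + d)) (2 ^ j)
        rw [heq] at hcov
        exact Relation.ReflTransGen.tail hrec hcov

end Perms

section Forward

variable {n : ℕ} {I : Set ℕ}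

lemma zmod2_eq_one_of_ne_zero {x : ZMod 2} (h : x ≠ 0) : x = 1 := by
  rcases zmod2_val_cases x with h0 | h1
  · exact absurd h0 h
  · exact h1

lemma eval_mem (hI : ∀ i ∈ I, i < 2 ^ n) {t : ℕ} (ht : t ∈ I) :
    evalFun n (negMonomial n t) ∈ code n I :=
  Submodule.subset_span ⟨t, ht, rfl⟩

lemma xor_pow_lt {t k : ℕ} (ht : t < 2 ^ n) (hk : k < n) : t ^^^ 2 ^ k < 2 ^ n :=
  Nat.xor_lt_two_pow ht (Nat.pow_lt_pow_right (by norm_num) hk)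

lemma aut_translate (hI : ∀ i ∈ I, i < 2 ^ n) (hupo : UPOCompliant n I) (k : Fin n) :
    IsCodeAut (code n I : Set (Fin (2 ^ n) → ZMod 2)) (affinePerm n 1 (Pi.single k 1)) := by
  apply isCodeAut_code_of
  intro t htI
  rw [perm_eval_translate]
  cases htk : Nat.testBit t k with
  | true =>
      have : (fun v => negMonomial n t (v + Pi.single k 1)) = negMonomial n t :=
        funext fun v => negMonomial_translate_true t k htk v
      rw [this]
      exact eval_mem hI htI
  | false =>
      have : (fun v => negMonomial n t (v + Pi.single k 1))
          = fun v => negMonomial n t v + negMonomial n (t ^^^ 2 ^ (k : ℕ)) v :=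
        funext fun v => negMonomial_translate_false t k htk v
      rw [this]
      have hmem2 : t ^^^ 2 ^ (k : ℕ) ∈ I :=
        hupo t htI _ (xor_pow_lt (hI t htI) k.isLt)
          (Relation.ReflTransGen.single (polarCovers_flip t k k.isLt htk))
      exact Submodule.add_mem _ (eval_mem hI htI) (eval_mem hI hmem2)

lemma xor_swap (x a b : ℕ) : (x ^^^ a) ^^^ b = (x ^^^ b) ^^^ a := by
  rw [Nat.xor_assoc, Nat.xor_assoc, Nat.xor_comm a b]

lemma aut_transvec (hI : ∀ i ∈ I, i < 2 ^ n) (hupo : UPOCompliant n I) (i j : Fin n)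
    (hji : j < i) :
    IsCodeAut (code n I : Set (Fin (2 ^ n) → ZMod 2))
      (affinePerm n (1 + Matrix.single i j (1 : ZMod 2)) 0) := by
  have hij : i ≠ j := fun h => absurd h.symm (ne_of_lt hji)
  apply isCodeAut_code_of
  intro t htI
  rw [perm_eval_transvec]
  cases hti : Nat.testBit t i with
  | true =>
      have : (fun v => negMonomial n t (v + Pi.single i (v j))) = negMonomial n t :=
        funext fun v => negMonomial_transvec_true t i j hti v
      rw [this]
      exact eval_mem hI htI
  | false =>
      cases htj : Nat.testBit t j with
      | false =>
          have : (fun v => negMonomial n t (v + Pi.single i (v j))) = negMonomial n t :=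
            funext fun v => negMonomial_transvec_ff t i j hij hti htj v
          rw [this]
          exact eval_mem hI htI
      | true =>
          have : (fun v => negMonomial n t (v + Pi.single i (v j)))
              = fun v => negMonomial n t v + negMonomial n (t ^^^ 2 ^ (i : ℕ)) v
                + negMonomial n ((t ^^^ 2 ^ (i : ℕ)) ^^^ 2 ^ (j : ℕ)) v :=
            funext fun v => negMonomial_transvec_ft t i j hij hti htj v
          rw [this]
          have ht2 : t ^^^ 2 ^ (i : ℕ) ∈ I :=
            hupo t htI _ (xor_pow_lt (hI t htI) i.isLt)
              (Relation.ReflTransGen.single (polarCovers_flip t i i.isLt hti))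
          have ht3 : (t ^^^ 2 ^ (i : ℕ)) ^^^ 2 ^ (j : ℕ) ∈ I := by
            have hle : polarLE n t ((t ^^^ 2 ^ (j : ℕ)) ^^^ 2 ^ ((j : ℕ) + ((i : ℕ) - (j : ℕ)))) :=
              polarLE_move ((i : ℕ) - (j : ℕ)) (j : ℕ) t (by omega)
                (by have := i.isLt; omega) htj
                (by rw [show (j : ℕ) + ((i : ℕ) - (j : ℕ)) = (i : ℕ) by omega]; exact hti)
            rw [show (j : ℕ) + ((i : ℕ) - (j : ℕ)) = (i : ℕ) by omega] at hle
            rw [xor_swap]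
            exact hupo t htI _ (xor_pow_lt (xor_pow_lt (hI t htI) j.isLt) i.isLt) hle
          exact Submodule.add_mem _
            (Submodule.add_mem _ (eval_mem hI htI) (eval_mem hI ht2)) (eval_mem hI ht3)

lemma std_mul_apply (i0 j0 : Fin n) (A : Matrix (Fin n) (Fin n) (ZMod 2)) (r c : Fin n) :
    (Matrix.single i0 j0 (1 : ZMod 2) * A) r c
      = if r = i0 then A j0 c else 0 := by
  by_cases h : r = i0
  · subst h
    rw [Matrix.single_mul_apply_same, one_mul, if_pos rfl]
  · rw [Matrix.single_mul_apply_of_ne 1 i0 j0 r c h, if_neg h]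

lemma transvec_sq (i j : Fin n) (hij : j ≠ i) :
    (1 + Matrix.single i j (1 : ZMod 2)) * (1 + Matrix.single i j 1) = 1 := by
  have hEE : Matrix.single i j (1 : ZMod 2) * Matrix.single i j 1 = 0 :=
    Matrix.single_mul_single_of_ne 1 i j i hij 1
  have h11 : (1 : ZMod 2) + 1 = 0 := by decide
  have hE2 : Matrix.single i j (1 : ZMod 2) + Matrix.single i j 1 = 0 := by
    rw [← Matrix.single_add, h11, Matrix.single_zero]
  rw [mul_add, mul_one, add_mul, one_mul, hEE, add_zero, add_assoc, hE2, add_zero]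

lemma transvec_isUnit (i j : Fin n) (hij : j ≠ i) :
    IsUnit (1 + Matrix.single i j (1 : ZMod 2)) :=
  ⟨⟨_, _, transvec_sq i j hij, transvec_sq i j hij⟩, rfl⟩

lemma diag_one_of_lower {A : Matrix (Fin n) (Fin n) (ZMod 2)} (hA : IsUnit A)
    (hlow : ∀ i j : Fin n, i < j → A i j = 0) (r : Fin n) : A r r = 1 := by
  have hbt : A.BlockTriangular OrderDual.toDual := by
    intro i j hij
    exact hlow i j hij
  have hdet : A.det = ∏ i : Fin n, A i i := Matrix.det_of_lowerTriangular A hbt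
  have hunit : IsUnit A.det := A.isUnit_iff_isUnit_det.mp hA
  apply zmod2_eq_one_of_ne_zero
  intro h0
  rw [hdet] at hunit
  have : (∏ i : Fin n, A i i) = 0 := Finset.prod_eq_zero (Finset.mem_univ r) h0
  rw [this] at hunit
  exact hunit.ne_zero rfl

lemma aut_lower_aux (hI : ∀ i ∈ I, i < 2 ^ n) (hupo : UPOCompliant n I) :
    ∀ m (A : Matrix (Fin n) (Fin n) (ZMod 2)),
      (Finset.univ.filter (fun p : Fin n × Fin n => p.1 ≠ p.2 ∧ A p.1 p.2 ≠ 0)).card = m →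
      IsUnit A → (∀ i j : Fin n, i < j → A i j = 0) →
      IsCodeAut (code n I : Set (Fin (2 ^ n) → ZMod 2)) (affinePerm n A 0) := by
  intro m
  induction m using Nat.strong_induction_on with
  | _ m ih =>
  intro A hcard hA hlow
  by_cases hm : m = 0
  · -- A is the identity
    have hAone : A = 1 := by
      ext r c
      by_cases hrc : r = c
      · subst hrc
        rw [diag_one_of_lower hA hlow r, Matrix.one_apply_eq]
      · have : (r, c) ∉ Finset.univ.filter
            (fun p : Fin n × Fin n => p.1 ≠ p.2 ∧ A p.1 p.2 ≠ 0) := by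
          rw [hm] at hcard
          rw [Finset.card_eq_zero] at hcard
          rw [hcard]
          exact Finset.notMem_empty _
        simp only [Finset.mem_filter, Finset.mem_univ, true_and, not_and, not_not] at this
        rw [this hrc, Matrix.one_apply_ne hrc]
    rw [hAone, affinePerm_one_zero]
    exact isCodeAut_id _
  · -- pick minimal column with nonzero off-diagonal entry
    have hne : (Finset.univ.filter (fun p : Fin n × Fin n => p.1 ≠ p.2 ∧ A p.1 p.2 ≠ 0)).Nonempty := by
      rw [← Finset.card_pos, hcard]
      omega
    set cols := Finset.univ.filter
      (fun j : Fin n => ∃ i : Fin n, i ≠ j ∧ A i j ≠ 0) with hcols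
    have hcolsne : cols.Nonempty := by
      obtain ⟨p, hp⟩ := hne
      simp only [Finset.mem_filter, Finset.mem_univ, true_and] at hp
      refine ⟨p.2, ?_⟩
      simp only [hcols, Finset.mem_filter, Finset.mem_univ, true_and]
      exact ⟨p.1, hp.1, hp.2⟩
    set j0 := cols.min' hcolsne with hj0
    have hj0mem : j0 ∈ cols := Finset.min'_mem _ _
    obtain ⟨i0, hi0ne, hi0⟩ : ∃ i : Fin n, i ≠ j0 ∧ A i j0 ≠ 0 := by
      have := hj0mem
      simp only [hcols, Finset.mem_filter, Finset.mem_univ, true_and] at this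
      exact this
    have hj0i0 : j0 < i0 := by
      rcases lt_or_gt_of_ne hi0ne with h | h
      · exact absurd (hlow i0 j0 h) hi0
      · exact h
    -- row j0 of A is e_{j0}
    have hrow : ∀ c : Fin n, c ≠ j0 → A j0 c = 0 := by
      intro c hc
      rcases lt_or_gt_of_ne hc with h | h
      · -- c < j0 : column c has no off-diagonal entries by minimality
        by_contra hAc
        have hcmem : c ∈ cols := by
          simp only [hcols, Finset.mem_filter, Finset.mem_univ, true_and]
          exact ⟨j0, Ne.symm hc, hAc⟩
        exact absurd (Finset.min'_le _ _ hcmem) (not_le.mpr h)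
      · exact hlow j0 c h
    set T := 1 + Matrix.single i0 j0 (1 : ZMod 2) with hT
    set A' := T * A with hA'
    have hA'entry : ∀ r c, A' r c = if r = i0 ∧ c = j0 then 0 else A r c := by
      intro r c
      rw [hA', hT, add_mul, one_mul, Matrix.add_apply, std_mul_apply]
      by_cases hr : r = i0
      · subst hr
        by_cases hc : c = j0
        · subst hc
          rw [if_pos rfl, if_pos ⟨rfl, rfl⟩]
          have h1 : A r j0 = 1 := zmod2_eq_one_of_ne_zero hi0
          have h2 : A j0 j0 = 1 := diag_one_of_lower hA hlow j0
          rw [h1, h2]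
          decide
        · rw [if_pos rfl, hrow c hc, add_zero, if_neg (fun hh => hc hh.2)]
      · rw [if_neg hr, add_zero, if_neg (fun hh => hr hh.1)]
    have hA'low : ∀ i j : Fin n, i < j → A' i j = 0 := by
      intro i j hij
      rw [hA'entry]
      by_cases h : i = i0 ∧ j = j0
      · rw [if_pos h]
      · rw [if_neg h]; exact hlow i j hij
    have hA'unit : IsUnit A' := (transvec_isUnit i0 j0 (ne_of_lt hj0i0)).mul hA
    have hAeq : A = T * A' := by
      rw [hA', ← mul_assoc, hT, transvec_sq i0 j0 (ne_of_lt hj0i0), one_mul]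
    have hsupp : Finset.univ.filter (fun p : Fin n × Fin n => p.1 ≠ p.2 ∧ A' p.1 p.2 ≠ 0)
        = (Finset.univ.filter (fun p : Fin n × Fin n => p.1 ≠ p.2 ∧ A p.1 p.2 ≠ 0)).erase
            (i0, j0) := by
      ext p
      simp only [Finset.mem_filter, Finset.mem_univ, true_and, Finset.mem_erase]
      rw [hA'entry]
      by_cases hp : p = (i0, j0)
      · subst hp
        simp
      · have : ¬ (p.1 = i0 ∧ p.2 = j0) := by
          intro hh
          exact hp (Prod.ext hh.1 hh.2)
        rw [if_neg this]
        tauto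
    have hcard' : (Finset.univ.filter
        (fun p : Fin n × Fin n => p.1 ≠ p.2 ∧ A' p.1 p.2 ≠ 0)).card = m - 1 := by
      rw [hsupp, Finset.card_erase_of_mem, hcard]
      simp only [Finset.mem_filter, Finset.mem_univ, true_and]
      exact ⟨hi0ne, hi0⟩
    have hrec := ih (m - 1) (by omega) A' hcard' hA'unit hA'low
    have hTaut := aut_transvec hI hupo i0 j0 hj0i0
    have hcomp : affinePerm n A 0 = (affinePerm n T 0) ∘ (affinePerm n A' 0) := by
      rw [affinePerm_comp, Matrix.mulVec_zero, add_zero, ← hAeq]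
    rw [hcomp]
    exact isCodeAut_comp hTaut hrec

lemma aut_translation_aux (hI : ∀ i ∈ I, i < 2 ^ n) (hupo : UPOCompliant n I) :
    ∀ m (b : Fin n → ZMod 2), (Finset.univ.filter (fun k : Fin n => b k ≠ 0)).card = m →
      IsCodeAut (code n I : Set (Fin (2 ^ n) → ZMod 2)) (affinePerm n 1 b) := by
  intro m
  induction m using Nat.strong_induction_on with
  | _ m ih =>
  intro b hcard
  by_cases hm : m = 0
  · have hb : b = 0 := by
      funext k
      show b k = 0
      by_contra hk
      have : k ∈ Finset.univ.filter (fun k : Fin n => b k ≠ 0) := by simp [hk]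
      rw [hm, Finset.card_eq_zero] at hcard
      rw [hcard] at this
      exact Finset.notMem_empty _ this
    rw [hb, affinePerm_one_zero]
    exact isCodeAut_id _
  · have hne : (Finset.univ.filter (fun k : Fin n => b k ≠ 0)).Nonempty := by
      rw [← Finset.card_pos, hcard]; omega
    obtain ⟨k, hk⟩ := hne
    simp only [Finset.mem_filter, Finset.mem_univ, true_and] at hk
    set b' := Function.update b k 0 with hb'
    have hbeq : b = b' + Pi.single k 1 := by
      funext r
      by_cases hr : r = k
      · subst hr
        simp [hb', zmod2_eq_one_of_ne_zero hk]
      · simp [hb', hr, Function.update_of_ne hr]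
    have hsupp : Finset.univ.filter (fun r : Fin n => b' r ≠ 0)
        = (Finset.univ.filter (fun r : Fin n => b r ≠ 0)).erase k := by
      ext r
      simp only [Finset.mem_filter, Finset.mem_univ, true_and, Finset.mem_erase]
      by_cases hr : r = k
      · subst hr; simp [hb']
      · simp [hb', Function.update_of_ne hr, hr]
    have hcard' : (Finset.univ.filter (fun r : Fin n => b' r ≠ 0)).card = m - 1 := by
      rw [hsupp, Finset.card_erase_of_mem, hcard]
      simp [hk]
    have hrec := ih (m - 1) (by omega) b' hcard'
    have hcomp : affinePerm n 1 b = (affinePerm n 1 (Pi.single k 1)) ∘ (affinePerm n 1 b') := by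
      rw [affinePerm_comp, Matrix.one_mul, Matrix.one_mulVec, ← hbeq]
    rw [hcomp]
    exact isCodeAut_comp (aut_translate hI hupo k) hrec

lemma forward_direction (hI : ∀ i ∈ I, i < 2 ^ n) (hupo : UPOCompliant n I)
    (A : Matrix (Fin n) (Fin n) (ZMod 2)) (b : Fin n → ZMod 2)
    (hA : IsUnit A) (hlow : ∀ i j : Fin n, i < j → A i j = 0) :
    IsCodeAut (code n I : Set (Fin (2 ^ n) → ZMod 2)) (affinePerm n A b) := by
  have hcomp : affinePerm n A b = (affinePerm n 1 b) ∘ (affinePerm n A 0) := by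
    rw [affinePerm_comp, Matrix.one_mul, Matrix.one_mulVec, zero_add]
  rw [hcomp]
  exact isCodeAut_comp (aut_translation_aux hI hupo _ b rfl)
    (aut_lower_aux hI hupo _ A rfl hA hlow)

section Converse

variable {n : ℕ} {I : Set ℕ}

lemma one_lower : ∀ i j : Fin n, i < j → (1 : Matrix (Fin n) (Fin n) (ZMod 2)) i j = 0 :=
  fun i j h => Matrix.one_apply_ne (ne_of_lt h)

lemma zmod2_cancel (a b : ZMod 2) : (a + b) + a = b := by revert a b; decide

lemma zmod2_cancel3 (a b c : ZMod 2) : ((a + b) + c) + a + b = c := by revert a b c; decide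

lemma cover1_eq {t s k : ℕ} (hbt : Nat.testBit t k = false) (hbs : Nat.testBit s k = true)
    (hag : ∀ r, r ≠ k → Nat.testBit t r = Nat.testBit s r) : s = t ^^^ 2 ^ k := by
  apply Nat.eq_of_testBit_eq
  intro r
  rw [testBit_xor_pow]
  by_cases hr : r = k
  · subst hr; rw [hbt, hbs]; simp
  · have : (decide (k = r)) = false := by simp [Ne.symm hr]
    rw [this, Bool.xor_false]
    exact (hag r hr).symm

lemma cover2_eq {t s k : ℕ} (hb1 : Nat.testBit t k = true) (hb2 : Nat.testBit t (k+1) = false)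
    (hbs1 : Nat.testBit s k = false) (hbs2 : Nat.testBit s (k+1) = true)
    (hag : ∀ r, r ≠ k → r ≠ k + 1 → Nat.testBit t r = Nat.testBit s r) :
    s = (t ^^^ 2 ^ k) ^^^ 2 ^ (k + 1) := by
  apply Nat.eq_of_testBit_eq
  intro r
  rw [testBit_xor_pow, testBit_xor_pow]
  by_cases hr : r = k
  · subst hr
    have : (decide (r + 1 = r)) = false := by simp only [decide_eq_false_iff_not]; omega
    rw [this, hbs1, hb1]
    simp
  · by_cases hr1 : r = k + 1
    · subst hr1
      have : (decide (k = k + 1)) = false := by simp only [decide_eq_false_iff_not]; omega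
      rw [this, hbs2, hb2]
      simp
    · have e1 : (decide (k = r)) = false := by simp [Ne.symm hr]
      have e2 : (decide (k + 1 = r)) = false := by simp [Ne.symm hr1]
      rw [e1, e2, Bool.xor_false, Bool.xor_false]
      exact (hag r hr hr1).symm

lemma evalFun_add (f g : (Fin n → ZMod 2) → ZMod 2) :
    evalFun n (fun v => f v + g v) = evalFun n f + evalFun n g := rfl

lemma flip_closure (hI : ∀ i ∈ I, i < 2 ^ n)
    (H : ∀ (A : Matrix (Fin n) (Fin n) (ZMod 2)) (b : Fin n → ZMod 2),
        IsUnit A → (∀ i j : Fin n, i < j → A i j = 0) →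
        IsCodeAut (code n I : Set (Fin (2 ^ n) → ZMod 2)) (affinePerm n A b))
    {t : ℕ} (ht : t ∈ I) (k : Fin n) (hbt : Nat.testBit t k = false) :
    t ^^^ 2 ^ (k : ℕ) ∈ I := by
  have haut := H 1 (Pi.single k 1) isUnit_one one_lower
  have hx : evalFun n (negMonomial n t) ∈ code n I := eval_mem hI ht
  have hy := haut _ hx
  rw [perm_eval_translate] at hy
  have hrw : (fun v => negMonomial n t (v + Pi.single k 1))
      = fun v => negMonomial n t v + negMonomial n (t ^^^ 2 ^ (k : ℕ)) v :=
    funext fun v => negMonomial_translate_false t k hbt v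
  rw [hrw, evalFun_add] at hy
  have hmem : evalFun n (negMonomial n (t ^^^ 2 ^ (k : ℕ))) ∈ code n I := by
    have := Submodule.add_mem (code n I) hy hx
    have heq : (evalFun n (negMonomial n t) + evalFun n (negMonomial n (t ^^^ 2 ^ (k : ℕ))))
        + evalFun n (negMonomial n t) = evalFun n (negMonomial n (t ^^^ 2 ^ (k : ℕ)))  := by
      funext idx
      exact zmod2_cancel _ _
    rwa [heq] at this
  exact mem_of_eval_mem hI (xor_pow_lt (hI t ht) k.isLt) hmem

lemma swap_closure (hI : ∀ i ∈ I, i < 2 ^ n)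
    (H : ∀ (A : Matrix (Fin n) (Fin n) (ZMod 2)) (b : Fin n → ZMod 2),
        IsUnit A → (∀ i j : Fin n, i < j → A i j = 0) →
        IsCodeAut (code n I : Set (Fin (2 ^ n) → ZMod 2)) (affinePerm n A b))
    {t : ℕ} (ht : t ∈ I) (k : ℕ) (hk : k + 1 < n)
    (hb1 : Nat.testBit t k = true) (hb2 : Nat.testBit t (k + 1) = false) :
    (t ^^^ 2 ^ k) ^^^ 2 ^ (k + 1) ∈ I := by
  set i : Fin n := ⟨k + 1, hk⟩ with hidef
  set j : Fin n := ⟨k, by omega⟩ with hjdef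
  have hij : i ≠ j := by
    intro h
    have : (i : ℕ) = (j : ℕ) := congrArg Fin.val h
    rw [hidef, hjdef] at this
    simp at this
  have hlowT : ∀ r c : Fin n, r < c →
      (1 + Matrix.single i j (1 : ZMod 2)) r c = 0 := by
    intro r c hrc
    rw [Matrix.add_apply, Matrix.one_apply_ne (ne_of_lt hrc),
      Matrix.single_apply_of_ne, add_zero]
    rintro ⟨rfl, rfl⟩
    rw [hidef, hjdef] at hrc
    simp [Fin.lt_def] at hrc
  have haut := H (1 + Matrix.single i j (1 : ZMod 2)) 0
    (transvec_isUnit i j (Ne.symm hij)) hlowT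
  have hx : evalFun n (negMonomial n t) ∈ code n I := eval_mem hI ht
  have hy := haut _ hx
  rw [perm_eval_transvec] at hy
  have hbti : Nat.testBit t (i : ℕ) = false := hb2
  have hbtj : Nat.testBit t (j : ℕ) = true := hb1
  have hrw : (fun v => negMonomial n t (v + Pi.single i (v j)))
      = fun v => (negMonomial n t v + negMonomial n (t ^^^ 2 ^ (i : ℕ)) v)
        + negMonomial n ((t ^^^ 2 ^ (i : ℕ)) ^^^ 2 ^ (j : ℕ)) v :=
    funext fun v => negMonomial_transvec_ft t i j hij hbti hbtj v
  rw [hrw] at hy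
  have ht1 : t ^^^ 2 ^ (i : ℕ) ∈ I := flip_closure hI H ht i hbti
  have hmem : evalFun n (negMonomial n ((t ^^^ 2 ^ (i : ℕ)) ^^^ 2 ^ (j : ℕ))) ∈ code n I := by
    have hsum := Submodule.add_mem (code n I)
      (Submodule.add_mem (code n I) hy hx) (eval_mem hI ht1)
    have heq : ((evalFun n (fun v => (negMonomial n t v + negMonomial n (t ^^^ 2 ^ (i : ℕ)) v)
          + negMonomial n ((t ^^^ 2 ^ (i : ℕ)) ^^^ 2 ^ (j : ℕ)) v))
        + evalFun n (negMonomial n t)) + evalFun n (negMonomial n (t ^^^ 2 ^ (i : ℕ)))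
        = evalFun n (negMonomial n ((t ^^^ 2 ^ (i : ℕ)) ^^^ 2 ^ (j : ℕ))) := by
      funext idx
      exact zmod2_cancel3 _ _ _
    rwa [heq] at hsum
  have hlt : (t ^^^ 2 ^ (i : ℕ)) ^^^ 2 ^ (j : ℕ) < 2 ^ n :=
    xor_pow_lt (xor_pow_lt (hI t ht) i.isLt) j.isLt
  have := mem_of_eval_mem hI hlt hmem
  have hswap : (t ^^^ 2 ^ (i : ℕ)) ^^^ 2 ^ (j : ℕ) = (t ^^^ 2 ^ k) ^^^ 2 ^ (k + 1) :=
    xor_swap t (2 ^ (i : ℕ)) (2 ^ (j : ℕ))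
  rwa [hswap] at this

lemma converse_direction (hI : ∀ i ∈ I, i < 2 ^ n)
    (H : ∀ (A : Matrix (Fin n) (Fin n) (ZMod 2)) (b : Fin n → ZMod 2),
        IsUnit A → (∀ i j : Fin n, i < j → A i j = 0) →
        IsCodeAut (code n I : Set (Fin (2 ^ n) → ZMod 2)) (affinePerm n A b)) :
    UPOCompliant n I := by
  have hcover : ∀ t ∈ I, ∀ s, polarCovers n t s → s ∈ I := by
    intro t ht s hc
    rcases hc with ⟨k, hkn, hbt, hbs, hag⟩ | ⟨k, hkn, hb1, hb2, hbs1, hbs2, hag⟩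
    · rw [cover1_eq hbt hbs hag]
      exact flip_closure hI H ht ⟨k, hkn⟩ hbt
    · rw [cover2_eq hb1 hb2 hbs1 hbs2 hag]
      exact swap_closure hI H ht k hkn hb1 hb2
  intro i hi j hj hle
  clear hj
  induction hle with
  | refl => exact hi
  | tail hab hbc ih => exact hcover _ ih _ hbc

end Converse

/-- Every permutation in `LTA` (i.e. every `π_{(A,b)}` with `A` invertible lower
triangular) is an automorphism of `C(I)` if and only if `I` is UPO-compliant. -/
theorem lta_subset_aut_iff_upo (n : ℕ) (I : Set ℕ) (hI : ∀ i ∈ I, i < 2 ^ n) :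
    (∀ (A : Matrix (Fin n) (Fin n) (ZMod 2)) (b : Fin n → ZMod 2),
        IsUnit A → (∀ i j : Fin n, i < j → A i j = 0) →
        IsCodeAut (code n I : Set (Fin (2 ^ n) → ZMod 2)) (affinePerm n A b)) ↔
      UPOCompliant n I := by
  constructor
  · exact converse_direction hI
  · intro hupo A b hA hlow
    exact forward_direction hI hupo A b hA hlow
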